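/- Let W = (W0, W1) be n×(l0+l1) with W1 block-diagonal across a row partition into blocks b = 1,...,B (orthogonal cut basis) and W0^T W1 = 0. Let Σ be an n×n positive definite matrix that is block-diagonal across the same row partition with blocks Σ_b. Suppose the rows within each block b are further partitioned by individuals m = 1,...,M, each individual having the same number of rows; suppose (i) the sub-block of Σ_b for individual m, Σ_{bm}, is the same matrix for all m; (ii) the rows of W0 in block b for individual m, W_{0bm}, are the same matrix for all m; (iii) W_{1bm} = (C_b x_{m1}, ..., C_b x_{mp}), i.e. the sub-block of W_{1b} for individual m consists of a fixed basis matrix C_b (the same for all m) multiplied by each entry of the individual's covariate vector x_m = (x_{m1},...,x_{mp}) ∈ ℝ^p; and (iv) Σ_{m=1}^M x_m = 0. Assume all relevant Gram matrices are invertible. Let μ ∈ ℝ^n and define η̃* = (W^T Σ^{-1} W)^{-1} W^T Σ^{-1} μ, partitioned as η̃* = (η̃0*, η̃_{11}*, ..., η̃_{1B}*). Then for every block b, η̃_{1b}* = (W_{1b}^T Σ_b^{-1} W_{1b})^{-1} W_{1b}^T Σ_b^{-1} μ_b, where μ_b is the subvector of μ for the rows in block b. -/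

import Mathlib

/-!
With `Σ⁻¹` and `W₁` block-diagonal, the normal equations couple the block `η̃₁_b` to the rest
of `η̃` only through the cross Gram matrix `W₁ᵀ Σ⁻¹ W₀`. Within block `b` this is
`(Xᵀ ⊗ C_bᵀ) (I ⊗ Σ_b⁻¹) (𝟙 ⊗ W₀_b) = (Xᵀ 𝟙) ⊗ (C_bᵀ Σ_b⁻¹ W₀_b)`, which vanishes because the
covariates are centred. The rows of the normal equations indexed by block `b` therefore read
`(W₁_bᵀ Σ_b⁻¹ W₁_b) η̃₁_b = W₁_bᵀ Σ_b⁻¹ μ_b`.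
-/

open scoped Kronecker

namespace Matrix

variable {R : Type*} [CommRing R]

section BlockDiagonal

variable {o : Type*} [DecidableEq o] {m' n' : o → Type*}

theorem eq_blockDiagonal'_of_apply {α : Type*} [Zero α] {A : Matrix (Σ i, m' i) (Σ i, n' i) α}
    {F : ∀ i, Matrix (m' i) (n' i) α}
    (hoff : ∀ i j (u : m' i) (v : n' j), i ≠ j → A ⟨i, u⟩ ⟨j, v⟩ = 0)
    (hdiag : ∀ i u v, A ⟨i, u⟩ ⟨i, v⟩ = F i u v) :
    A = blockDiagonal' F := by
  ext ⟨i, u⟩ ⟨j, v⟩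
  by_cases h : i = j
  · subst h
    rw [blockDiagonal'_apply_eq, hdiag]
  · rw [blockDiagonal'_apply_ne _ _ _ h, hoff _ _ _ _ h]

theorem PosDef.of_blockDiagonal' {K : Type*} [Ring K] [PartialOrder K] [StarRing K]
    {F : ∀ i, Matrix (m' i) (m' i) K} (h : (blockDiagonal' F).PosDef) (i : o) :
    (F i).PosDef := by
  have hsub : (blockDiagonal' F).submatrix (Sigma.mk i) (Sigma.mk i) = F i := by
    ext
    rw [submatrix_apply, blockDiagonal'_apply_eq]
  exact hsub ▸ h.submatrix sigma_mk_injective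

variable [Fintype o]

theorem blockDiagonal'_mulVec_apply [∀ i, Fintype (n' i)] (F : ∀ i, Matrix (m' i) (n' i) R)
    (v : (Σ i, n' i) → R) (b : o) (i : m' b) :
    (blockDiagonal' F *ᵥ v) ⟨b, i⟩ = (F b *ᵥ fun j => v ⟨b, j⟩) i := by
  simp only [mulVec, dotProduct, ← Finset.univ_sigma_univ, Finset.sum_sigma]
  rw [Fintype.sum_eq_single b fun b' hb' => Finset.sum_eq_zero fun j _ => by
    rw [blockDiagonal'_apply_ne _ _ _ (Ne.symm hb'), zero_mul]]
  simp only [blockDiagonal'_apply_eq]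

theorem blockDiagonal'_mul_apply [∀ i, Fintype (n' i)] {l : Type*}
    (F : ∀ i, Matrix (m' i) (n' i) R) (V : Matrix (Σ i, n' i) l R) (b : o) (i : m' b) (c : l) :
    (blockDiagonal' F * V) ⟨b, i⟩ c = (F b * V.submatrix (Sigma.mk b) id) i c :=
  blockDiagonal'_mulVec_apply F (fun j => V j c) b i

theorem inv_blockDiagonal' [∀ i, Fintype (m' i)] [∀ i, DecidableEq (m' i)]
    (F : ∀ i, Matrix (m' i) (m' i) R) (hF : ∀ i, IsUnit (F i).det) :
    (blockDiagonal' F)⁻¹ = blockDiagonal' fun i => (F i)⁻¹ := by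
  refine inv_eq_right_inv ?_
  simp only [← blockDiagonal'_mul, mul_nonsing_inv _ (hF _)]
  exact blockDiagonal'_one

theorem blockDiagonal'_normal_eq_apply [∀ i, Fintype (m' i)] [∀ i, Fintype (n' i)]
    {V : ∀ i, Matrix (m' i) (n' i) R} {Q : ∀ i, Matrix (m' i) (m' i) R}
    {η : (Σ i, n' i) → R} {μ : (Σ i, m' i) → R}
    (h : ((blockDiagonal' V)ᵀ * blockDiagonal' Q * blockDiagonal' V) *ᵥ η =
      (blockDiagonal' V)ᵀ *ᵥ (blockDiagonal' Q *ᵥ μ)) (b : o) :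
    ((V b)ᵀ * Q b * V b) *ᵥ (fun j => η ⟨b, j⟩) = (V b)ᵀ *ᵥ (Q b *ᵥ fun i => μ ⟨b, i⟩) := by
  ext j
  have hj := congrFun h ⟨b, j⟩
  rwa [blockDiagonal'_transpose, ← blockDiagonal'_mul, ← blockDiagonal'_mul,
    blockDiagonal'_mulVec_apply, blockDiagonal'_mulVec_apply, funext fun i =>
      blockDiagonal'_mulVec_apply Q μ b i] at hj

end BlockDiagonal

variable {n l₀ l₁ : Type*} [Fintype n] [Fintype l₀] [Fintype l₁]

theorem fromCols_normal_eq_inr {W₀ : Matrix n l₀ R} {W₁ : Matrix n l₁ R} {Q : Matrix n n R}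
    {η : l₀ ⊕ l₁ → R} {μ : n → R} (hcross : W₁ᵀ * Q * W₀ = 0)
    (h : ((fromCols W₀ W₁)ᵀ * Q * fromCols W₀ W₁) *ᵥ η = (fromCols W₀ W₁)ᵀ *ᵥ (Q *ᵥ μ)) :
    (W₁ᵀ * Q * W₁) *ᵥ (η ∘ Sum.inr) = W₁ᵀ *ᵥ (Q *ᵥ μ) := by
  have h₁ := congrArg (· ∘ Sum.inr) h
  rw [transpose_fromCols, fromRows_mul, fromRows_mul, fromRows_mulVec, fromRows_mulVec] at h₁
  simpa only [Sum.elim_comp_inr, mul_fromCols, fromCols_mulVec, hcross, zero_mulVec,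
    zero_add] using h₁

variable {m p t k l : Type*} [Fintype m] [Fintype t]

theorem kronecker_mul_submatrix_snd_eq_zero {X : Matrix p m R} (D : Matrix k t R)
    (V : Matrix t l R) (hX : ∀ j, ∑ i, X j i = 0) :
    (X ⊗ₖ D) * V.submatrix (Prod.snd : m × t → t) id = 0 := by
  ext ⟨j, κ⟩ c
  simp only [mul_apply, kroneckerMap_apply, submatrix_apply, id, Fintype.sum_prod_type,
    zero_apply, mul_assoc, ← Finset.mul_sum, ← Finset.sum_mul, hX, zero_mul]

theorem kronecker_transpose_mul_one_kronecker_mul_submatrix_snd_eq_zero [DecidableEq m]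
    {X : Matrix m p R} (C : Matrix t k R) (S : Matrix t t R) (V : Matrix t l R)
    (hX : ∀ j, ∑ i, X i j = 0) :
    (X ⊗ₖ C)ᵀ * ((1 : Matrix m m R) ⊗ₖ S) * V.submatrix (Prod.snd : m × t → t) id = 0 := by
  rw [← kroneckerMap_transpose, ← mul_kronecker_mul, Matrix.mul_one]
  exact kronecker_mul_submatrix_snd_eq_zero _ _ hX

end Matrix

open Matrix

theorem cut_basis_weighted_least_squares_blockwise_general
    {B l0 M p : ℕ} (T K : Fin B → ℕ)
    (W0 : Matrix ((b : Fin B) × (Fin M × Fin (T b))) (Fin l0) ℝ)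
    (W0base : (b : Fin B) → Matrix (Fin (T b)) (Fin l0) ℝ)
    (hW0 : ∀ (b : Fin B) (m : Fin M) (t : Fin (T b)) (c : Fin l0),
      W0 ⟨b, (m, t)⟩ c = W0base b t c)
    (C : (b : Fin B) → Matrix (Fin (T b)) (Fin (K b)) ℝ)
    (x : Fin M → Fin p → ℝ)
    (hx : ∀ j : Fin p, ∑ m : Fin M, x m j = 0)
    (W1 : Matrix ((b : Fin B) × (Fin M × Fin (T b))) ((b : Fin B) × (Fin p × Fin (K b))) ℝ)
    (hW1 : ∀ (b b' : Fin B) (m : Fin M) (t : Fin (T b)) (j : Fin p) (k : Fin (K b')),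
      W1 ⟨b, (m, t)⟩ ⟨b', (j, k)⟩ =
        if h : b = b' then C b t (Fin.cast (congrArg K h.symm) k) * x m j else 0)
    (Sb : (b : Fin B) → Matrix (Fin (T b)) (Fin (T b)) ℝ)
    (Sig : Matrix ((b : Fin B) × (Fin M × Fin (T b))) ((b : Fin B) × (Fin M × Fin (T b))) ℝ)
    (hSigOff : ∀ (b b' : Fin B) (u : Fin M × Fin (T b)) (v : Fin M × Fin (T b')),
      b ≠ b' → Sig ⟨b, u⟩ ⟨b', v⟩ = 0)
    (hSigBlk : ∀ (b : Fin B) (m m' : Fin M) (t t' : Fin (T b)),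
      Sig ⟨b, (m, t)⟩ ⟨b, (m', t')⟩ = if m = m' then Sb b t t' else 0)
    (hSigPD : Sig.PosDef)
    (W : Matrix ((b : Fin B) × (Fin M × Fin (T b)))
      (Fin l0 ⊕ (b : Fin B) × (Fin p × Fin (K b))) ℝ)
    (hW : W = Matrix.fromCols W0 W1)
    (W1blk : (b : Fin B) → Matrix (Fin M × Fin (T b)) (Fin p × Fin (K b)) ℝ)
    (hW1blk : ∀ (b : Fin B) (mt : Fin M × Fin (T b)) (jk : Fin p × Fin (K b)),
      W1blk b mt jk = C b mt.2 jk.2 * x mt.1 jk.1)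
    (Sigblk : (b : Fin B) → Matrix (Fin M × Fin (T b)) (Fin M × Fin (T b)) ℝ)
    (hSigblk : ∀ (b : Fin B) (mt mt' : Fin M × Fin (T b)),
      Sigblk b mt mt' = if mt.1 = mt'.1 then Sb b mt.2 mt'.2 else 0)
    (hGram : IsUnit (Wᵀ * Sig⁻¹ * W).det)
    (hGramBlk : ∀ b, IsUnit ((W1blk b)ᵀ * (Sigblk b)⁻¹ * W1blk b).det)
    (μ : ((b : Fin B) × (Fin M × Fin (T b))) → ℝ)
    (ηtilde : (Fin l0 ⊕ (b : Fin B) × (Fin p × Fin (K b))) → ℝ)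
    (hη : ηtilde = (Wᵀ * Sig⁻¹ * W)⁻¹ *ᵥ (Wᵀ *ᵥ (Sig⁻¹ *ᵥ μ))) :
    ∀ b : Fin B,
      (fun jk : Fin p × Fin (K b) => ηtilde (Sum.inr ⟨b, jk⟩)) =
        ((W1blk b)ᵀ * (Sigblk b)⁻¹ * W1blk b)⁻¹ *ᵥ
          ((W1blk b)ᵀ *ᵥ ((Sigblk b)⁻¹ *ᵥ fun mt : Fin M × Fin (T b) => μ ⟨b, mt⟩)) := by
  have hSig : Sig = blockDiagonal' Sigblk :=
    eq_blockDiagonal'_of_apply hSigOff fun b ⟨m, t⟩ ⟨m', t'⟩ => by rw [hSigBlk, hSigblk]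
  have hW1' : W1 = blockDiagonal' W1blk :=
    eq_blockDiagonal'_of_apply (fun b b' ⟨m, t⟩ ⟨j, k⟩ h => by rw [hW1, dif_neg h])
      fun b ⟨m, t⟩ ⟨j, k⟩ => by rw [hW1, dif_pos rfl, hW1blk, Fin.cast_eq_self]
  have hSigblkDet : ∀ b, IsUnit (Sigblk b).det := fun b =>
    (isUnit_iff_isUnit_det _).mp ((hSig ▸ hSigPD).of_blockDiagonal' b).isUnit
  have hSigInv : Sig⁻¹ = blockDiagonal' fun b => (Sigblk b)⁻¹ := by
    rw [hSig, inv_blockDiagonal' _ hSigblkDet]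
  have hSigblkKron : ∀ b, Sigblk b = 1 ⊗ₖ Sb b := fun b => by
    ext ⟨m, t⟩ ⟨m', t'⟩
    rw [hSigblk, kroneckerMap_apply, one_apply, ite_mul, one_mul, zero_mul]
  have hW1blkKron : ∀ b, W1blk b = of x ⊗ₖ C b := fun b => by
    ext ⟨m, t⟩ ⟨j, k⟩
    rw [hW1blk, kroneckerMap_apply, of_apply, mul_comm]
  have hcross : W1ᵀ * Sig⁻¹ * W0 = 0 := by
    ext ⟨b, jk⟩ c
    have hW0blk : W0.submatrix (Sigma.mk b) id = (W0base b).submatrix Prod.snd id := by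
      ext ⟨m, t⟩ c
      exact hW0 b m t c
    rw [hW1', hSigInv, blockDiagonal'_transpose, ← blockDiagonal'_mul, blockDiagonal'_mul_apply,
      hW0blk, hSigblkKron, inv_kronecker, inv_one, hW1blkKron,
      kronecker_transpose_mul_one_kronecker_mul_submatrix_snd_eq_zero (X := of x) _ _ _ hx]
    rfl
  have hnormal := fromCols_normal_eq_inr hcross (μ := μ) (η := ηtilde) (by
    rw [← hW, hη, mulVec_mulVec, mul_nonsing_inv _ hGram, one_mulVec])
  rw [hW1', hSigInv] at hnormal
  intro b
  rw [← blockDiagonal'_normal_eq_apply hnormal b, mulVec_mulVec, nonsing_inv_mul _ (hGramBlk b),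
    one_mulVec]
  rfl

/-- **Lemma S2 (orthogonal cut basis, dependent/functional data).**
Rows are partitioned into blocks (regions) `b = 1,…,B`; within block `b`, rows are further
indexed by individuals `m = 1,…,M` and grid points `t = 1,…,T b` (each individual has the same
number of rows). `W1` is an orthogonal cut basis (block-diagonal across regions, `W0ᵀW1 = 0`),
the covariance `Sig` is block-diagonal across regions with per-individual blocks `Sb b` that
are identical across individuals, the baseline basis `W0` is identical across individuals,
the covariate block is `W_{1bm} = (C_b x_{m1}, …, C_b x_{mp})`, and the covariates are centered
(`Σ_m x_m = 0`). Then the block-`b` component of the weighted least-squares solution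
`η̃* = (WᵀSig⁻¹W)⁻¹ WᵀSig⁻¹ μ` is
`η̃*_{1b} = (W_{1b}ᵀ Sig_b⁻¹ W_{1b})⁻¹ W_{1b}ᵀ Sig_b⁻¹ μ_b`. -/
theorem cut_basis_weighted_least_squares_blockwise
    {B l0 M p : ℕ} (T K : Fin B → ℕ)
    (W0 : Matrix ((b : Fin B) × (Fin M × Fin (T b))) (Fin l0) ℝ)
    (W0base : (b : Fin B) → Matrix (Fin (T b)) (Fin l0) ℝ)
    (hW0 : ∀ (b : Fin B) (m : Fin M) (t : Fin (T b)) (c : Fin l0),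
      W0 ⟨b, (m, t)⟩ c = W0base b t c)
    (C : (b : Fin B) → Matrix (Fin (T b)) (Fin (K b)) ℝ)
    (x : Fin M → Fin p → ℝ)
    (hx : ∀ j : Fin p, ∑ m : Fin M, x m j = 0)
    (W1 : Matrix ((b : Fin B) × (Fin M × Fin (T b))) ((b : Fin B) × (Fin p × Fin (K b))) ℝ)
    (hW1 : ∀ (b b' : Fin B) (m : Fin M) (t : Fin (T b)) (j : Fin p) (k : Fin (K b')),
      W1 ⟨b, (m, t)⟩ ⟨b', (j, k)⟩ =
        if h : b = b' then C b t (Fin.cast (congrArg K h.symm) k) * x m j else 0)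
    (horth : W0ᵀ * W1 = 0)
    (Sb : (b : Fin B) → Matrix (Fin (T b)) (Fin (T b)) ℝ)
    (Sig : Matrix ((b : Fin B) × (Fin M × Fin (T b))) ((b : Fin B) × (Fin M × Fin (T b))) ℝ)
    (hSigOff : ∀ (b b' : Fin B) (u : Fin M × Fin (T b)) (v : Fin M × Fin (T b')),
      b ≠ b' → Sig ⟨b, u⟩ ⟨b', v⟩ = 0)
    (hSigBlk : ∀ (b : Fin B) (m m' : Fin M) (t t' : Fin (T b)),
      Sig ⟨b, (m, t)⟩ ⟨b, (m', t')⟩ = if m = m' then Sb b t t' else 0)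
    (hSigPD : Sig.PosDef)
    (W : Matrix ((b : Fin B) × (Fin M × Fin (T b)))
      (Fin l0 ⊕ (b : Fin B) × (Fin p × Fin (K b))) ℝ)
    (hW : W = Matrix.fromCols W0 W1)
    (W1blk : (b : Fin B) → Matrix (Fin M × Fin (T b)) (Fin p × Fin (K b)) ℝ)
    (hW1blk : ∀ (b : Fin B) (mt : Fin M × Fin (T b)) (jk : Fin p × Fin (K b)),
      W1blk b mt jk = C b mt.2 jk.2 * x mt.1 jk.1)
    (Sigblk : (b : Fin B) → Matrix (Fin M × Fin (T b)) (Fin M × Fin (T b)) ℝ)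
    (hSigblk : ∀ (b : Fin B) (mt mt' : Fin M × Fin (T b)),
      Sigblk b mt mt' = if mt.1 = mt'.1 then Sb b mt.2 mt'.2 else 0)
    (hGram : IsUnit (Wᵀ * Sig⁻¹ * W).det)
    (hGramBlk : ∀ b, IsUnit ((W1blk b)ᵀ * (Sigblk b)⁻¹ * W1blk b).det)
    (μ : ((b : Fin B) × (Fin M × Fin (T b))) → ℝ)
    (ηtilde : (Fin l0 ⊕ (b : Fin B) × (Fin p × Fin (K b))) → ℝ)
    (hη : ηtilde = (Wᵀ * Sig⁻¹ * W)⁻¹ *ᵥ (Wᵀ *ᵥ (Sig⁻¹ *ᵥ μ))) :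
    ∀ b : Fin B,
      (fun jk : Fin p × Fin (K b) => ηtilde (Sum.inr ⟨b, jk⟩)) =
        ((W1blk b)ᵀ * (Sigblk b)⁻¹ * W1blk b)⁻¹ *ᵥ
          ((W1blk b)ᵀ *ᵥ ((Sigblk b)⁻¹ *ᵥ fun mt : Fin M × Fin (T b) => μ ⟨b, mt⟩)) :=
  cut_basis_weighted_least_squares_blockwise_general T K W0 W0base hW0 C x hx W1 hW1 Sb Sig hSigOff
    hSigBlk hSigPD W hW W1blk hW1blk Sigblk hSigblk hGram hGramBlk μ ηtilde hη
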